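/- arXiv:2406.19377 — 5 statements merged into one kernel-verified Lean document; each statement's English description precedes it below -/
import Mathlib

section
/- Let n and k be positive integers with k ≤ n, and let G be a simple graph on vertex set {1,…,n}. Define f : Gr(k,n) → ℝ by f(P) = Σ_{(i,j)∈E} P_{ii} P_{jj} + Σ_{i=1}^n P_{ii}², where the first sum runs over ordered adjacent pairs (so each undirected edge is counted twice). Then G contains a clique of size k if and only if the supremum of f over Gr(k,n) equals k²; moreover, when a k-clique exists this supremum is attained (i.e., k² is the greatest element of the image of f on Gr(k,n)). -/
open Matrix BigOperators

/-- The projection model of the Grassmannian `Gr(k,n)`: real symmetric idempotent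
`n × n` matrices of trace `k`. -/
def Grassmannian (k n : ℕ) : Set (Matrix (Fin n) (Fin n) ℝ) :=
  {P | Pᵀ = P ∧ P * P = P ∧ P.trace = (k : ℝ)}

/-- The quadratic objective `f(P) = ∑_{(i,j)∈E} P_{ii} P_{jj} + ∑_i P_{ii}²`,
where each undirected edge is counted twice (ordered adjacent pairs). -/
noncomputable def cliqueObjective {n : ℕ} (G : SimpleGraph (Fin n)) [DecidableRel G.Adj]
    (P : Matrix (Fin n) (Fin n) ℝ) : ℝ :=
  (∑ i, ∑ j, if G.Adj i j then P i i * P j j else 0) + ∑ i, (P i i) ^ 2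

/-!
For a projection `P` the diagonal `d = diag P` satisfies `0 ≤ dᵢ ≤ 1` and `∑ dᵢ = tr P = k`, and
`k² = (∑ dᵢ)² = f(P) + ∑_{i ≠ j non-adjacent} dᵢ dⱼ`, the last sum being nonnegative. Hence `f ≤ k²`
on `Gr(k,n)`, with equality exactly when the support of `d` is a clique; that support has at
least `k` elements because the `dᵢ` are at most `1`. Conversely the coordinate projection onto a
`k`-clique attains `k²`. Since `Gr(k,n)` is compact, a supremum equal to `k²` is attained.
-/

open Finset

namespace SimpleGraph

variable {V : Type*} [Fintype V] (G : SimpleGraph V) [DecidableRel G.Adj]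

def adjProductSum (d : V → ℝ) : ℝ :=
  ∑ i, ∑ j, if G.Adj i j then d i * d j else 0

theorem sq_sum_eq_adjProductSum_add_compl [DecidableEq V] (d : V → ℝ) :
    (∑ i, d i) ^ 2 = G.adjProductSum d + ∑ i, d i ^ 2 + Gᶜ.adjProductSum d := by
  have hsplit : ∀ i j, d i * d j = (if G.Adj i j then d i * d j else 0) +
      (if i = j then d i * d j else 0) + (if Gᶜ.Adj i j then d i * d j else 0) := by
    intro i j
    by_cases hij : i = j
    · subst hij; simp
    · by_cases h : G.Adj i j <;> simp [h, hij, compl_adj]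
  simp only [sq, sum_mul_sum, adjProductSum, ← sum_add_distrib]
  refine sum_congr rfl fun i _ => ?_
  rw [sum_congr rfl fun j _ => hsplit i j, sum_add_distrib, sum_add_distrib, sum_ite_eq]
  simp

variable {G}

theorem adjProductSum_nonneg {d : V → ℝ} (hd : 0 ≤ d) : 0 ≤ G.adjProductSum d :=
  sum_nonneg fun i _ => sum_nonneg fun j _ => by
    split_ifs
    exacts [mul_nonneg (hd i) (hd j), le_rfl]

theorem isClique_support_of_adjProductSum_compl_eq_zero [DecidableEq V] {d : V → ℝ}
    (hd : 0 ≤ d) (h : Gᶜ.adjProductSum d = 0) : G.IsClique {i | d i ≠ 0} := by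
  intro i hi j hj hij
  by_contra hnadj
  have hterm_nonneg : ∀ i j, 0 ≤ if Gᶜ.Adj i j then d i * d j else 0 := fun i j => by
    split_ifs
    exacts [mul_nonneg (hd i) (hd j), le_rfl]
  have hrow := (sum_eq_zero_iff_of_nonneg fun i _ => sum_nonneg fun j _ => hterm_nonneg i j).1
    h i (mem_univ i)
  have hij' := (sum_eq_zero_iff_of_nonneg fun j _ => hterm_nonneg i j).1 hrow j (mem_univ j)
  rw [if_pos ((compl_adj G i j).2 ⟨hij, hnadj⟩)] at hij'
  exact mul_ne_zero hi hj hij'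

end SimpleGraph

namespace Matrix

variable {ι : Type*} [Fintype ι] {P : Matrix ι ι ℝ}

theorem diag_eq_sum_sq_of_isSymm_of_isIdempotentElem (hsym : P.IsSymm)
    (hidem : IsIdempotentElem P) (i : ι) : P i i = ∑ j, P i j ^ 2 := by
  conv_lhs => rw [← hidem.eq, mul_apply]
  refine sum_congr rfl fun j _ => ?_
  rw [← hsym.apply i j, sq]

theorem sq_le_diag_of_isSymm_of_isIdempotentElem (hsym : P.IsSymm)
    (hidem : IsIdempotentElem P) (i j : ι) : P i j ^ 2 ≤ P i i := by
  rw [diag_eq_sum_sq_of_isSymm_of_isIdempotentElem hsym hidem i]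
  exact single_le_sum (fun l _ => sq_nonneg (P i l)) (mem_univ j)

theorem diag_mem_Icc_of_isSymm_of_isIdempotentElem (hsym : P.IsSymm)
    (hidem : IsIdempotentElem P) (i : ι) : P i i ∈ Set.Icc 0 1 := by
  have h := sq_le_diag_of_isSymm_of_isIdempotentElem hsym hidem i i
  have h0 : 0 ≤ P i i := (sq_nonneg _).trans h
  exact ⟨h0, by nlinarith⟩

theorem abs_le_one_of_isSymm_of_isIdempotentElem (hsym : P.IsSymm)
    (hidem : IsIdempotentElem P) (i j : ι) : |P i j| ≤ 1 := by
  rw [← sq_le_one_iff_abs_le_one]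
  exact (sq_le_diag_of_isSymm_of_isIdempotentElem hsym hidem i j).trans
    (diag_mem_Icc_of_isSymm_of_isIdempotentElem hsym hidem i).2

end Matrix

namespace Grassmannian

variable {n k : ℕ} {P : Matrix (Fin n) (Fin n) ℝ}

theorem diag_nonneg (hP : P ∈ Grassmannian k n) : 0 ≤ P.diag :=
  fun i => (diag_mem_Icc_of_isSymm_of_isIdempotentElem hP.1 hP.2.1 i).1

theorem sum_diag (hP : P ∈ Grassmannian k n) : ∑ i, P.diag i = k := hP.2.2

theorem isClosed : IsClosed (Grassmannian k n) :=
  (isClosed_eq continuous_id.matrix_transpose continuous_id).inter <|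
    (isClosed_eq (continuous_id.matrix_mul continuous_id) continuous_id).inter <|
      isClosed_eq continuous_id.matrix_trace continuous_const

theorem isCompact : IsCompact (Grassmannian k n) := by
  refine (isCompact_univ_pi fun _ => isCompact_univ_pi fun _ => isCompact_Icc (a := (-1 : ℝ))
    (b := 1)).of_isClosed_subset isClosed fun P hP i _ j _ => ?_
  exact abs_le.1 (abs_le_one_of_isSymm_of_isIdempotentElem hP.1 hP.2.1 i j)

theorem diagonal_indicator_mem (s : Finset (Fin n)) :
    diagonal (fun i => if i ∈ s then (1 : ℝ) else 0) ∈ Grassmannian s.card n := by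
  refine ⟨diagonal_transpose _, ?_, ?_⟩
  · rw [diagonal_mul_diagonal]
    congr 1
    ext i
    split_ifs <;> simp
  · simp [trace_diagonal]

theorem nonempty (hkn : k ≤ n) : (Grassmannian k n).Nonempty := by
  obtain ⟨s, -, rfl⟩ := exists_subset_card_eq (s := (univ : Finset (Fin n))) (by simpa using hkn)
  exact ⟨_, diagonal_indicator_mem s⟩

end Grassmannian

section Objective

variable {n k : ℕ} (G : SimpleGraph (Fin n)) [DecidableRel G.Adj]

theorem cliqueObjective_eq (P : Matrix (Fin n) (Fin n) ℝ) :
    cliqueObjective G P = G.adjProductSum P.diag + ∑ i, P.diag i ^ 2 := rfl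

theorem continuous_cliqueObjective : Continuous (cliqueObjective G) := by
  refine .add (continuous_finsetSum _ fun i _ => continuous_finsetSum _ fun j _ => ?_) (by fun_prop)
  exact .if_const _ (by fun_prop) continuous_const

variable {G} {P : Matrix (Fin n) (Fin n) ℝ}

theorem cliqueObjective_add_adjProductSum_compl (hP : P ∈ Grassmannian k n) :
    cliqueObjective G P + Gᶜ.adjProductSum P.diag = (k : ℝ) ^ 2 := by
  rw [cliqueObjective_eq, ← Grassmannian.sum_diag hP, G.sq_sum_eq_adjProductSum_add_compl]

theorem cliqueObjective_le (hP : P ∈ Grassmannian k n) : cliqueObjective G P ≤ (k : ℝ) ^ 2 := by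
  linarith [cliqueObjective_add_adjProductSum_compl (G := G) hP,
    SimpleGraph.adjProductSum_nonneg (G := Gᶜ) (Grassmannian.diag_nonneg hP)]

theorem cliqueObjective_diagonal_indicator {s : Finset (Fin n)} (hs : G.IsNClique k s) :
    cliqueObjective G (diagonal fun i => if i ∈ s then (1 : ℝ) else 0) = (k : ℝ) ^ 2 := by
  have hmem := hs.card_eq ▸ Grassmannian.diagonal_indicator_mem s
  rw [← cliqueObjective_add_adjProductSum_compl (G := G) hmem, left_eq_add]
  refine sum_eq_zero fun i _ => sum_eq_zero fun j _ => ite_eq_right_iff.2 fun hij => ?_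
  rw [SimpleGraph.compl_adj] at hij
  by_cases hi : i ∈ s <;> by_cases hj : j ∈ s <;> simp [hi, hj]
  exact hij.2 (hs.isClique hi hj hij.1)

theorem exists_isNClique_of_cliqueObjective_eq (hP : P ∈ Grassmannian k n)
    (h : cliqueObjective G P = (k : ℝ) ^ 2) : ∃ s : Finset (Fin n), G.IsNClique k s := by
  set t := univ.filter fun i => P i i ≠ 0
  have ht : G.IsClique (t : Set (Fin n)) := by
    refine (G.isClique_support_of_adjProductSum_compl_eq_zero (Grassmannian.diag_nonneg hP)
      ?_).subset fun i hi => (mem_filter.1 hi).2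
    linarith [cliqueObjective_add_adjProductSum_compl (G := G) hP]
  have hkt : k ≤ t.card := by
    have : (k : ℝ) ≤ t.card := calc
      (k : ℝ) = ∑ i ∈ t, P i i := by rw [sum_filter_ne_zero]; exact (Grassmannian.sum_diag hP).symm
      _ ≤ ∑ i ∈ t, 1 := sum_le_sum fun i _ =>
        (diag_mem_Icc_of_isSymm_of_isIdempotentElem hP.1 hP.2.1 i).2
      _ = t.card := by simp
    exact_mod_cast this
  obtain ⟨s, hst, rfl⟩ := exists_subset_card_eq hkt
  exact ⟨s, ht.subset (coe_subset.2 hst), rfl⟩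

end Objective

theorem clique_decision_iff_sup_eq_k_sq_general (n k : ℕ) (hkn : k ≤ n)
    (G : SimpleGraph (Fin n)) [DecidableRel G.Adj] :
    ((∃ s : Finset (Fin n), G.IsNClique k s) ↔
      sSup (cliqueObjective G '' Grassmannian k n) = (k : ℝ) ^ 2) ∧
    ((∃ s : Finset (Fin n), G.IsNClique k s) →
      IsGreatest (cliqueObjective G '' Grassmannian k n) ((k : ℝ) ^ 2)) := by
  have hgreatest (h : ∃ s : Finset (Fin n), G.IsNClique k s) :
      IsGreatest (cliqueObjective G '' Grassmannian k n) ((k : ℝ) ^ 2) := by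
    obtain ⟨s, hs⟩ := h
    refine ⟨⟨_, hs.card_eq ▸ Grassmannian.diagonal_indicator_mem s,
      cliqueObjective_diagonal_indicator hs⟩, ?_⟩
    rintro _ ⟨P, hP, rfl⟩
    exact cliqueObjective_le hP
  refine ⟨⟨fun h => (hgreatest h).csSup_eq, fun h => ?_⟩, hgreatest⟩
  have hmax := (Grassmannian.isCompact.image (continuous_cliqueObjective G)).sSup_mem
    ((Grassmannian.nonempty hkn).image (cliqueObjective G))
  obtain ⟨P, hP, hPmax⟩ := h ▸ hmax
  exact exists_isNClique_of_cliqueObjective_eq hP hPmax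

theorem clique_decision_iff_sup_eq_k_sq (n k : ℕ) (hk : 0 < k) (hkn : k ≤ n)
    (G : SimpleGraph (Fin n)) [DecidableRel G.Adj] :
    ((∃ s : Finset (Fin n), G.IsNClique k s) ↔
      sSup (cliqueObjective G '' Grassmannian k n) = (k : ℝ) ^ 2) ∧
    ((∃ s : Finset (Fin n), G.IsNClique k s) →
      IsGreatest (cliqueObjective G '' Grassmannian k n) ((k : ℝ) ^ 2)) :=
  clique_decision_iff_sup_eq_k_sq_general n k hkn G
end

section
/- Let n and k be positive integers with k ≤ n, and let G be a simple graph on vertex set {1,…,n} that contains no clique of size k. Then for every P ∈ Gr(k,n), the value f(P) = Σ_{(i,j)∈E} P_{ii} P_{jj} + Σ_{i=1}^n P_{ii}² satisfies f(P) ≤ k² − 1/(n−k+1)². -/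
open Matrix BigOperators

theorem cliqueObjective_le_of_no_clique (n k : ℕ) (hk : 0 < k) (hkn : k ≤ n)
    (G : SimpleGraph (Fin n)) [DecidableRel G.Adj]
    (hnoclique : ¬ ∃ s : Finset (Fin n), G.IsNClique k s)
    (P : Matrix (Fin n) (Fin n) ℝ) (hP : P ∈ Grassmannian k n) :
    (∑ i, ∑ j, if G.Adj i j then P i i * P j j else 0) + ∑ i, (P i i) ^ 2 ≤
      (k : ℝ) ^ 2 - 1 / ((n : ℝ) - (k : ℝ) + 1) ^ 2 := by
  obtain ⟨hsym, hidem, htr⟩ := hP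
  set d : Fin n → ℝ := fun i => P i i with hd
  show (∑ i, ∑ j, if G.Adj i j then d i * d j else 0) + ∑ i, (d i) ^ 2 ≤
      (k : ℝ) ^ 2 - 1 / ((n : ℝ) - (k : ℝ) + 1) ^ 2
  have hsymm : ∀ i j, P j i = P i j := fun i j => congrFun (congrFun hsym i) j
  have hdsq : ∀ i, d i = ∑ j, (P i j) ^ 2 := by
    intro i
    have h := congrFun (congrFun hidem i) i
    rw [Matrix.mul_apply] at h
    rw [hd]
    simp only
    rw [← h]
    refine Finset.sum_congr rfl fun j _ => ?_
    rw [hsymm i j]; ring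
  have hd0 : ∀ i, 0 ≤ d i := by
    intro i; rw [hdsq i]; positivity
  have hd1 : ∀ i, d i ≤ 1 := by
    intro i
    have h1 : (P i i) ^ 2 ≤ d i := by
      rw [hdsq i]
      exact Finset.single_le_sum (f := fun j => (P i j) ^ 2) (fun j _ => sq_nonneg _) (Finset.mem_univ i)
    have h2 : d i ^ 2 ≤ d i := h1
    nlinarith [hd0 i]
  have hsum : ∑ i, d i = (k : ℝ) := by
    simpa [Matrix.trace, Matrix.diag] using htr
  -- max-weight k-subset
  have hne : (Finset.univ.powersetCard k : Finset (Finset (Fin n))).Nonempty := by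
    apply Finset.powersetCard_nonempty.mpr
    simpa using hkn
  obtain ⟨s, hs_mem, hs_max⟩ :=
    Finset.exists_max_image _ (fun t => ∑ i ∈ t, d i) hne
  have hs_card : s.card = k := (Finset.mem_powersetCard.mp hs_mem).2
  have hswap : ∀ i ∈ s, ∀ j, j ∉ s → d j ≤ d i := by
    intro i hi j hj
    by_contra hlt
    push_neg at hlt
    have hji : j ∉ s.erase i := fun h => hj (Finset.mem_of_mem_erase h)
    have hcard' : (insert j (s.erase i)).card = k := by
      rw [Finset.card_insert_of_notMem hji, Finset.card_erase_of_mem hi, hs_card]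
      omega
    have hmem' : insert j (s.erase i) ∈ Finset.univ.powersetCard k :=
      Finset.mem_powersetCard.mpr ⟨Finset.subset_univ _, hcard'⟩
    have hle := hs_max _ hmem'
    rw [Finset.sum_insert hji] at hle
    have herase : ∑ x ∈ s.erase i, d x = (∑ x ∈ s, d x) - d i := by
      rw [← Finset.add_sum_erase s d hi]; ring
    rw [herase] at hle
    linarith
  have hsne : s.Nonempty := by
    rw [← Finset.card_pos, hs_card]; exact hk
  obtain ⟨i0, hi0, hmin⟩ := Finset.exists_min_image s d hsne
  set m := d i0 with hm_def
  have hNpos : (0 : ℝ) < (n : ℝ) - k + 1 := by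
    have : (k : ℝ) ≤ n := Nat.cast_le.mpr hkn
    linarith
  -- lower bound on m
  have hm : 1 ≤ ((n : ℝ) - k + 1) * m := by
    have h1 : ∑ i ∈ s.erase i0, d i ≤ (k : ℝ) - 1 := by
      calc ∑ i ∈ s.erase i0, d i ≤ ∑ _i ∈ s.erase i0, (1 : ℝ) :=
            Finset.sum_le_sum fun i _ => hd1 i
        _ = ((s.erase i0).card : ℝ) := by simp
        _ = (k : ℝ) - 1 := by
            rw [Finset.card_erase_of_mem hi0, hs_card, Nat.cast_sub hk, Nat.cast_one]
    have h2 : ∑ i ∈ Finset.univ \ s, d i ≤ ((n : ℝ) - k) * m := by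
      calc ∑ i ∈ Finset.univ \ s, d i ≤ ∑ _i ∈ Finset.univ \ s, m :=
            Finset.sum_le_sum fun j hj => hswap i0 hi0 j (Finset.mem_sdiff.mp hj).2
        _ = ((Finset.univ \ s).card : ℝ) * m := by
            rw [Finset.sum_const, nsmul_eq_mul]
        _ = ((n : ℝ) - k) * m := by
            rw [Finset.card_sdiff_of_subset (Finset.subset_univ s), Finset.card_univ,
              Fintype.card_fin, hs_card, Nat.cast_sub hkn]
    have hsplit : ∑ i ∈ Finset.univ \ s, d i + ∑ i ∈ s, d i = (k : ℝ) := by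
      rw [Finset.sum_sdiff (Finset.subset_univ s)]; exact hsum
    have h3 : ∑ i ∈ s, d i ≤ (k : ℝ) - 1 + m := by
      have := Finset.add_sum_erase s d hi0
      linarith [this]
    linarith
  have hm0 : 0 ≤ m := hd0 i0
  -- non-edge in s
  have hnc : ¬ G.IsClique (s : Set (Fin n)) := fun h => hnoclique ⟨s, ⟨h, hs_card⟩⟩
  rw [SimpleGraph.isClique_iff, Set.Pairwise] at hnc
  push_neg at hnc
  obtain ⟨a, ha, b, hb, hab, hnadj⟩ := hnc
  have ha' : a ∈ s := ha
  have hb' : b ∈ s := hb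
  -- the non-edge sum T
  set F : Fin n → Fin n → ℝ :=
    fun i j => if ¬ G.Adj i j ∧ i ≠ j then d i * d j else 0 with hF
  have hFnn : ∀ i j, 0 ≤ F i j := by
    intro i j
    rw [hF]; simp only
    split
    · exact mul_nonneg (hd0 i) (hd0 j)
    · exact le_refl 0
  have key : ∀ i j : Fin n,
      (if G.Adj i j then d i * d j else 0) + (if i = j then d i * d j else 0) + F i j
        = d i * d j := by
    intro i j
    rw [hF]; simp only
    by_cases h1 : G.Adj i j
    · have hne' : i ≠ j := G.ne_of_adj h1
      simp [h1, hne']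
    · by_cases h2 : i = j
      · simp [h1, h2]
      · simp [h1, h2]
  have htot : ∑ i, ∑ j, d i * d j = (k : ℝ) ^ 2 := by
    rw [← Finset.sum_mul_sum, hsum]; ring
  have hsplit2 : (∑ i, ∑ j, if G.Adj i j then d i * d j else 0)
      + (∑ i, ∑ j, if i = j then d i * d j else 0)
      + (∑ i, ∑ j, F i j) = (k : ℝ) ^ 2 := by
    rw [← htot, ← Finset.sum_add_distrib, ← Finset.sum_add_distrib]
    refine Finset.sum_congr rfl fun i _ => ?_
    rw [← Finset.sum_add_distrib, ← Finset.sum_add_distrib]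
    exact Finset.sum_congr rfl fun j _ => key i j
  have hdiag : ∑ i, ∑ j, (if i = j then d i * d j else 0) = ∑ i, d i ^ 2 := by
    refine Finset.sum_congr rfl fun i _ => ?_
    rw [Finset.sum_ite_eq]
    simp [pow_two]
  -- lower bound on T
  have hma : m ≤ d a := hmin a ha'
  have hmb : m ≤ d b := hmin b hb'
  have hFa : F a b = d a * d b := by
    rw [hF]; simp [hnadj, hab]
  have hFb : F b a = d b * d a := by
    have hnadj' : ¬ G.Adj b a := fun h => hnadj h.symm
    rw [hF]; simp [hnadj', hab.symm]
  have h1 : F a b ≤ ∑ j, F a j :=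
    Finset.single_le_sum (fun j _ => hFnn a j) (Finset.mem_univ b)
  have h2 : F b a ≤ ∑ j, F b j :=
    Finset.single_le_sum (fun j _ => hFnn b j) (Finset.mem_univ a)
  have hsub : ∑ i ∈ ({a, b} : Finset (Fin n)), ∑ j, F i j ≤ ∑ i, ∑ j, F i j :=
    Finset.sum_le_sum_of_subset_of_nonneg (Finset.subset_univ _)
      (fun i _ _ => Finset.sum_nonneg fun j _ => hFnn i j)
  rw [Finset.sum_pair hab] at hsub
  have hmm : m * m ≤ d a * d b :=
    mul_le_mul hma hmb hm0 (hd0 a)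
  have hT : 2 * (m * m) ≤ ∑ i, ∑ j, F i j := by
    nlinarith [h1, h2, hsub, hFa, hFb, hmm]
  -- finish
  have hinv : 1 / ((n : ℝ) - k + 1) ^ 2 ≤ m * m := by
    rw [div_le_iff₀ (by positivity)]
    nlinarith [hm, hNpos]
  have hgoal : (∑ i, ∑ j, if G.Adj i j then d i * d j else 0) + ∑ i, d i ^ 2
      = (k : ℝ) ^ 2 - ∑ i, ∑ j, F i j := by
    rw [← hdiag]; linarith [hsplit2]
  rw [hgoal]
  nlinarith [hT, hinv, mul_self_nonneg m]
end

section
/- (Generalized Motzkin–Straus) Let k ≤ n be positive integers and let G be a simple graph on vertex set {1,…,n} whose clique number satisfies ω(G) ≥ k. Then the maximum of f(x) = Σ_{(i,j)∈E} x_i x_j over Δ_{k,n} equals k²(1 − 1/ω(G)), and this maximum is attained. -/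
/-!
If `u` and `v` are non-adjacent, `f x = x ⬝ᵥ A *ᵥ x` is affine along `e_u - e_v`, so moving all of
the weight of one of them onto the other does not decrease `f`, preserves `x ≥ 0` and `∑ x`, and
shrinks the support. Hence we may assume the support of `x` is a clique; then
`f x = (∑ x)² - ∑ x²`, and Cauchy–Schwarz on the clique gives `∑ x² ≥ (∑ x)² / ω`. The bound is
attained by the uniform weight `k / ω` on a maximum clique, which lies in the box since `k ≤ ω`.
-/

open Finset Matrix

namespace SimpleGraph

variable {V : Type*} [Fintype V] {G : SimpleGraph V}

lemma sq_sum_le_cliqueNum_mul_sum_sq {x : V → ℝ} (hx : G.IsClique {i | x i ≠ 0}) :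
    (∑ i, x i) ^ 2 ≤ G.cliqueNum * ∑ i, x i ^ 2 := by
  set s : Finset V := {i | x i ≠ 0}
  have hs : G.IsClique (s : Set V) := by simpa [s] using hx
  calc (∑ i, x i) ^ 2 = (∑ i ∈ s, x i) ^ 2 := by rw [sum_filter_ne_zero]
    _ ≤ #s * ∑ i ∈ s, x i ^ 2 := sq_sum_le_card_mul_sum_sq
    _ ≤ G.cliqueNum * ∑ i, x i ^ 2 := by
      gcongr ?_ * ?_
      · exact_mod_cast hs.card_le_cliqueNum
      · exact sum_le_sum_of_subset_of_nonneg (subset_univ s) fun i _ _ => sq_nonneg (x i)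

variable [DecidableEq V] [DecidableRel G.Adj]

lemma dotProduct_adjMatrix_mulVec_of_isClique {x : V → ℝ} (hx : G.IsClique {i | x i ≠ 0}) :
    x ⬝ᵥ G.adjMatrix ℝ *ᵥ x = (∑ i, x i) ^ 2 - ∑ i, x i ^ 2 := by
  have entry (i j : V) :
      (if G.Adj i j then x i * x j else 0) = x i * x j - if i = j then x i * x j else 0 := by
    by_cases hij : i = j
    · simp [hij]
    by_cases hxi : x i = 0
    · simp [hxi]
    by_cases hxj : x j = 0
    · simp [hxj]
    simp [hx hxi hxj hij, hij]
  simp only [dotProduct_mulVec_adjMatrix, entry, sum_sub_distrib, sum_ite_eq, mem_univ, if_true,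
    sq, sum_mul_sum]

lemma dotProduct_adjMatrix_mulVec_ite_of_isClique {s : Finset V} (hs : G.IsClique (s : Set V))
    (c : ℝ) :
    (fun i => if i ∈ s then c else 0) ⬝ᵥ G.adjMatrix ℝ *ᵥ (fun i => if i ∈ s then c else 0)
      = (#s * c) ^ 2 - #s * c ^ 2 := by
  have hcl : G.IsClique {i | (if i ∈ s then c else 0) ≠ 0} :=
    hs.subset fun _ hi => of_not_not fun his => hi (if_neg his)
  rw [dotProduct_adjMatrix_mulVec_of_isClique hcl]
  simp [apply_ite (· ^ 2), sum_ite_mem]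

lemma dotProduct_adjMatrix_mulVec_add_single_sub_single {u v : V} (huv : ¬ G.Adj u v)
    (x : V → ℝ) (t : ℝ) :
    (x + (Pi.single u t - Pi.single v t)) ⬝ᵥ G.adjMatrix ℝ *ᵥ (x + (Pi.single u t - Pi.single v t))
      = x ⬝ᵥ G.adjMatrix ℝ *ᵥ x
        + 2 * t * ((G.adjMatrix ℝ *ᵥ x) u - (G.adjMatrix ℝ *ᵥ x) v) := by
  set d : V → ℝ := Pi.single u t - Pi.single v t
  have hsymm : x ⬝ᵥ G.adjMatrix ℝ *ᵥ d = d ⬝ᵥ G.adjMatrix ℝ *ᵥ x := by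
    rw [← dotProduct_transpose_mulVec, transpose_adjMatrix]
  have hdd : d ⬝ᵥ G.adjMatrix ℝ *ᵥ d = 0 := by
    simp [d, mulVec_sub, dotProduct_sub, sub_dotProduct, adjMatrix_apply, huv, G.adj_comm v u]
  have hdx : d ⬝ᵥ G.adjMatrix ℝ *ᵥ x = t * ((G.adjMatrix ℝ *ᵥ x) u - (G.adjMatrix ℝ *ᵥ x) v) := by
    simp only [d, sub_dotProduct, single_dotProduct]
    ring
  rw [mulVec_add, dotProduct_add, add_dotProduct, add_dotProduct, hsymm, hdd, hdx]
  ring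

lemma exists_card_support_lt_of_not_adj {x : V → ℝ} (hx : 0 ≤ x) {u v : V} (hu : x u ≠ 0)
    (hv : x v ≠ 0) (huv : u ≠ v) (hadj : ¬ G.Adj u v) :
    ∃ y : V → ℝ, 0 ≤ y ∧ ∑ i, y i = ∑ i, x i ∧
      x ⬝ᵥ G.adjMatrix ℝ *ᵥ x ≤ y ⬝ᵥ G.adjMatrix ℝ *ᵥ y ∧ #{i | y i ≠ 0} < #{i | x i ≠ 0} := by
  wlog hle : (G.adjMatrix ℝ *ᵥ x) v ≤ (G.adjMatrix ℝ *ᵥ x) u generalizing u v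
  · exact this hv hu huv.symm (fun h => hadj h.symm) (le_of_not_ge hle)
  set y := x + (Pi.single u (x v) - Pi.single v (x v))
  have hy (i : V) : y i = if i = v then 0 else if i = u then x u + x v else x i := by
    by_cases hiv : i = v
    · subst hiv; simp [y, huv.symm]
    by_cases hiu : i = u
    · subst hiu; simp [y, huv]
    · simp [y, hiu, hiv]
  refine ⟨y, fun i => ?_, ?_, ?_, ?_⟩
  · rw [hy]
    split_ifs
    exacts [le_rfl, add_nonneg (hx u) (hx v), hx i]
  · simp [y, sum_add_distrib]
  · rw [dotProduct_adjMatrix_mulVec_add_single_sub_single hadj]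
    have := mul_nonneg (hx v) (sub_nonneg.2 hle)
    linarith
  · have hsub : ({i | y i ≠ 0} : Finset V) ⊆ ({i | x i ≠ 0} : Finset V).erase v := by
      intro i
      simp only [mem_filter, mem_univ, true_and, mem_erase, hy]
      split_ifs with hiv hiu
      · simp
      · exact fun _ => ⟨hiv, hiu ▸ hu⟩
      · exact fun h => ⟨hiv, h⟩
    exact (card_le_card hsub).trans_lt (card_erase_lt_of_mem (by simpa using hv))

theorem dotProduct_adjMatrix_mulVec_le {x : V → ℝ} (hx : 0 ≤ x) :
    x ⬝ᵥ G.adjMatrix ℝ *ᵥ x ≤ (∑ i, x i) ^ 2 * (1 - 1 / G.cliqueNum) := by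
  induction hm : #{i | x i ≠ 0} using Nat.strong_induction_on generalizing x with
  | _ m ih =>
  by_cases hcl : G.IsClique {i | x i ≠ 0}
  · have hsq : (∑ i, x i) ^ 2 / G.cliqueNum ≤ ∑ i, x i ^ 2 :=
      div_le_of_le_mul₀ (Nat.cast_nonneg _) (sum_nonneg fun i _ => sq_nonneg (x i))
        ((sq_sum_le_cliqueNum_mul_sum_sq hcl).trans_eq (mul_comm _ _))
    rw [dotProduct_adjMatrix_mulVec_of_isClique hcl, mul_one_sub, mul_one_div]
    linarith
  · obtain ⟨u, hu, v, hv, huv, hadj⟩ : ∃ u, x u ≠ 0 ∧ ∃ v, x v ≠ 0 ∧ u ≠ v ∧ ¬ G.Adj u v := by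
      simpa [IsClique, Set.Pairwise] using hcl
    obtain ⟨y, hy, hsum, hle, hcard⟩ := exists_card_support_lt_of_not_adj hx hu hv huv hadj
    exact hsum ▸ hle.trans (ih _ (hm ▸ hcard) hy rfl)

end SimpleGraph

open SimpleGraph

theorem generalized_motzkin_straus_general (n k : ℕ) (hk : 0 < k)
    (G : SimpleGraph (Fin n)) [DecidableRel G.Adj] (hω : k ≤ G.cliqueNum) :
    IsGreatest
      {v : ℝ | ∃ x : Fin n → ℝ, (∀ i, 0 ≤ x i ∧ x i ≤ 1) ∧ (∑ i, x i) = (k : ℝ) ∧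
        v = ∑ i, ∑ j, if G.Adj i j then x i * x j else 0}
      ((k : ℝ) ^ 2 * (1 - 1 / (G.cliqueNum : ℝ))) := by
  obtain ⟨S, hS⟩ := G.exists_isNClique_cliqueNum
  have hω₀ : (0 : ℝ) < G.cliqueNum := by exact_mod_cast hk.trans_le hω
  have hkω : (k : ℝ) / G.cliqueNum ≤ 1 := (div_le_one hω₀).2 (by exact_mod_cast hω)
  refine ⟨⟨fun i => if i ∈ S then k / G.cliqueNum else 0, fun i => ?_, ?_, ?_⟩, ?_⟩
  · dsimp only
    split_ifs
    exacts [⟨by positivity, hkω⟩, ⟨le_rfl, zero_le_one⟩]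
  · simp only [sum_ite_mem, univ_inter, sum_const, hS.card_eq, nsmul_eq_mul]
    field_simp
  · rw [← dotProduct_mulVec_adjMatrix, dotProduct_adjMatrix_mulVec_ite_of_isClique hS.isClique,
      hS.card_eq]
    field_simp
  · rintro _ ⟨x, hx, hsum, rfl⟩
    rw [← dotProduct_mulVec_adjMatrix, ← hsum]
    exact dotProduct_adjMatrix_mulVec_le fun i => (hx i).1

theorem generalized_motzkin_straus (n k : ℕ) (hk : 0 < k) (hkn : k ≤ n)
    (G : SimpleGraph (Fin n)) [DecidableRel G.Adj] (hω : k ≤ G.cliqueNum) :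
    IsGreatest
      {v : ℝ | ∃ x : Fin n → ℝ, (∀ i, 0 ≤ x i ∧ x i ≤ 1) ∧ (∑ i, x i) = (k : ℝ) ∧
        v = ∑ i, ∑ j, if G.Adj i j then x i * x j else 0}
      ((k : ℝ) ^ 2 * (1 - 1 / (G.cliqueNum : ℝ))) :=
  generalized_motzkin_straus_general n k hk G hω
end

section
/- (Schur–Horn for projections) Let k ≤ n be positive integers. The image of Gr(k,n) under the diagonal map P ↦ (P_{11},…,P_{nn}) is exactly Δ_{k,n}; that is, a vector x ∈ ℝⁿ is the diagonal of some real symmetric idempotent n×n matrix of trace k if and only if 0 ≤ x_i ≤ 1 for all i and x_1 + ⋯ + x_n = k. -/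
open Matrix BigOperators

lemma conj_diag {m N : ℕ} (Q : Matrix (Fin m) (Fin m) ℝ) (E : Matrix (Fin N) (Fin m) ℝ)
    (i : Fin N) (α : Fin m) (w : ℝ) (h : E i = Pi.single α w) :
    (E * Q * Eᵀ) i i = w * Q α α * w := by
  simp [Matrix.mul_apply, Matrix.transpose_apply, h, Pi.single_apply, Finset.mul_sum,
    Finset.sum_mul, ite_mul, mul_ite]

lemma split_last (m : ℕ) (Q : Matrix (Fin (m+1)) (Fin (m+1)) ℝ)
    (hs : Qᵀ = Q) (hi : Q * Q = Q) (a b : ℝ) (ha : 0 ≤ a) (hb : 0 ≤ b)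
    (hQ : Q (Fin.last m) (Fin.last m) = a + b) :
    ∃ P : Matrix (Fin (m+2)) (Fin (m+2)) ℝ, Pᵀ = P ∧ P * P = P ∧
      (∀ i : Fin m, P i.castSucc.castSucc i.castSucc.castSucc = Q i.castSucc i.castSucc) ∧
      P (Fin.last m).castSucc (Fin.last m).castSucc = a ∧
      P (Fin.last (m+1)) (Fin.last (m+1)) = b := by
  have htnn : (0:ℝ) ≤ a + b := by linarith
  set c : ℝ := if a + b = 0 then 1 else Real.sqrt (a/(a+b)) with hc
  set s : ℝ := if a + b = 0 then 0 else Real.sqrt (b/(a+b)) with hsdef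
  have hc2 : c * c * (a + b) = a := by
    by_cases h0 : a + b = 0
    · simp [hc, h0]; linarith
    · rw [hc, if_neg h0, Real.mul_self_sqrt (by positivity)]
      field_simp
  have hs2 : s * s * (a + b) = b := by
    by_cases h0 : a + b = 0
    · simp [hsdef, h0]; linarith
    · rw [hsdef, if_neg h0, Real.mul_self_sqrt (by positivity)]
      field_simp
  have hcs : c * c + s * s = 1 := by
    by_cases h0 : a + b = 0
    · simp [hc, hsdef, h0]
    · have h1 : (c*c+s*s) * (a+b) = 1 * (a+b) := by rw [add_mul, one_mul]; linarith
      exact mul_right_cancel₀ h0 h1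
  set E : Matrix (Fin (m+2)) (Fin (m+1)) ℝ :=
    Matrix.of (Fin.lastCases (Pi.single (Fin.last m) s)
      (Fin.lastCases (Pi.single (Fin.last m) c)
        (fun i : Fin m => Pi.single i.castSucc 1))) with hE
  have hE0 : ∀ i : Fin m, E i.castSucc.castSucc = Pi.single i.castSucc (1:ℝ) := by
    intro i; funext j; simp [hE, Matrix.of_apply]
  have hEp : E (Fin.last m).castSucc = Pi.single (Fin.last m) c := by
    funext j; simp [hE, Matrix.of_apply]
  have hEq : E (Fin.last (m+1)) = Pi.single (Fin.last m) s := by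
    funext j; simp [hE, Matrix.of_apply]
  have hEE : Eᵀ * E = 1 := by
    ext j j'
    rw [Matrix.mul_apply]
    have expand : ∑ i : Fin (m+2), Eᵀ j i * E i j'
        = (∑ i : Fin m, (Pi.single i.castSucc (1:ℝ) : Fin (m+1) → ℝ) j
             * (Pi.single i.castSucc (1:ℝ) : Fin (m+1) → ℝ) j')
          + (Pi.single (Fin.last m) c : Fin (m+1) → ℝ) j * (Pi.single (Fin.last m) c : Fin (m+1) → ℝ) j'
          + (Pi.single (Fin.last m) s : Fin (m+1) → ℝ) j * (Pi.single (Fin.last m) s : Fin (m+1) → ℝ) j' := by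
      rw [Fin.sum_univ_castSucc (n := m+1), Fin.sum_univ_castSucc (n := m)]
      simp [Matrix.transpose_apply, hE0, hEp, hEq]
    rw [expand]
    have hne : ∀ x : Fin m, Fin.last m ≠ x.castSucc := fun x => (Fin.castSucc_lt_last x).ne'
    have hne' : ∀ x : Fin m, x.castSucc ≠ Fin.last m := fun x => (Fin.castSucc_lt_last x).ne
    refine Fin.lastCases ?_ ?_ j' <;> [skip; intro j₂] <;>
      refine Fin.lastCases ?_ ?_ j <;> [skip; intro j₁; skip; intro j₁]
    · simp [Pi.single_apply, Matrix.one_apply, hcs, hne]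
    · simp [Pi.single_apply, Matrix.one_apply, hne, hne']
    · simp [Pi.single_apply, Matrix.one_apply, hne, hne']
    · simp [Pi.single_apply, Matrix.one_apply, Fin.castSucc_inj, eq_comm, hne, hne']
  refine ⟨E * Q * Eᵀ, ?_, ?_, ?_, ?_, ?_⟩
  · rw [Matrix.transpose_mul, Matrix.transpose_mul, Matrix.transpose_transpose, hs,
      Matrix.mul_assoc]
  · have h1 : Eᵀ * (E * (Q * Eᵀ)) = Q * Eᵀ := by rw [← Matrix.mul_assoc, hEE, Matrix.one_mul]
    calc (E*Q*Eᵀ)*(E*Q*Eᵀ) = E*(Q*(Eᵀ*(E*(Q*Eᵀ)))) := by simp only [Matrix.mul_assoc]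
      _ = E*(Q*(Q*Eᵀ)) := by rw [h1]
      _ = E*Q*Eᵀ := by rw [← Matrix.mul_assoc Q Q, hi, ← Matrix.mul_assoc]
  · intro i
    rw [conj_diag Q E _ i.castSucc 1 (hE0 i)]; ring
  · rw [conj_diag Q E _ (Fin.last m) c hEp, hQ]; linarith [hc2]
  · rw [conj_diag Q E _ (Fin.last m) s hEq, hQ]; linarith [hs2]

lemma exists_proj : ∀ (n : ℕ) (x : Fin n → ℝ) (k : ℕ), (∀ i, 0 ≤ x i ∧ x i ≤ 1) →
    ∑ i, x i = (k:ℝ) →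
    ∃ P : Matrix (Fin n) (Fin n) ℝ, Pᵀ = P ∧ P * P = P ∧ ∀ i, P i i = x i := by
  intro n
  induction n with
  | zero => exact fun x k _ _ => ⟨0, by simp, by simp, fun i => i.elim0⟩
  | succ n ih =>
    cases n with
    | zero =>
      intro x k hb hsum
      have hx : x 0 = (k:ℝ) := by simpa using hsum
      have hk1 : k ≤ 1 := by
        have : (k:ℝ) ≤ 1 := hx ▸ (hb 0).2
        exact_mod_cast this
      have hx2 : x 0 * x 0 = x 0 := by
        interval_cases k <;> simp_all
      refine ⟨Matrix.of fun _ _ => x 0, ?_, ?_, ?_⟩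
      · ext i j; rfl
      · ext i j; simp [Matrix.mul_apply, hx2]
      · intro i; rw [show i = 0 by omega]; rfl
    | succ m =>
      intro x k hb hsum
      set a := x (Fin.last m).castSucc with hadef
      set b := x (Fin.last (m+1)) with hbdef
      have hdec : ∑ i, x i = (∑ i : Fin m, x i.castSucc.castSucc) + a + b := by
        rw [Fin.sum_univ_castSucc (n := m+1), Fin.sum_univ_castSucc (n := m)]
      have hS : (0:ℝ) ≤ ∑ i : Fin m, x i.castSucc.castSucc :=
        Finset.sum_nonneg fun i _ => (hb _).1
      by_cases hab : a + b ≤ 1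
      · -- merge a and b into a+b
        set y : Fin (m+1) → ℝ := Fin.snoc (fun i : Fin m => x i.castSucc.castSucc) (a + b)
          with hy
        have hyb : ∀ i, 0 ≤ y i ∧ y i ≤ 1 := by
          intro i
          refine Fin.lastCases ?_ ?_ i
          · simp only [hy, Fin.snoc_last]
            exact ⟨add_nonneg (hb _).1 (hb _).1, hab⟩
          · intro j; simp only [hy, Fin.snoc_castSucc]; exact hb _
        have hysum : ∑ i, y i = (k:ℝ) := by
          rw [Fin.sum_univ_castSucc (n := m)]
          simp only [hy, Fin.snoc_last, Fin.snoc_castSucc]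
          linarith [hdec, hsum]
        obtain ⟨Q, hQs, hQi, hQd⟩ := ih y k hyb hysum
        have hQl : Q (Fin.last m) (Fin.last m) = a + b := by
          rw [hQd]; simp [hy]
        obtain ⟨P, h1, h2, h3, h4, h5⟩ :=
          split_last m Q hQs hQi a b (hb _).1 (hb _).1 hQl
        refine ⟨P, h1, h2, ?_⟩
        intro i
        refine Fin.lastCases ?_ ?_ i
        · exact h5
        · intro j
          refine Fin.lastCases ?_ ?_ j
          · exact h4
          · intro i'
            rw [h3 i', hQd]; simp [hy]
      · -- complement case
        push_neg at hab
        have hkle : k ≤ m + 2 := by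
          have h1 : (k:ℝ) ≤ ((m:ℝ) + 2) := by
            rw [← hsum]
            calc ∑ i, x i ≤ ∑ _i : Fin (m+2), (1:ℝ) :=
                  Finset.sum_le_sum fun i _ => (hb i).2
              _ = (m:ℝ) + 2 := by push_cast; simp
          exact_mod_cast h1
        set y : Fin (m+1) → ℝ := Fin.snoc (fun i : Fin m => 1 - x i.castSucc.castSucc)
          ((1 - a) + (1 - b)) with hy
        have hyb : ∀ i, 0 ≤ y i ∧ y i ≤ 1 := by
          intro i
          refine Fin.lastCases ?_ ?_ i
          · simp only [hy, Fin.snoc_last]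
            constructor
            · linarith [(hb (Fin.last m).castSucc).2, (hb (Fin.last (m+1))).2]
            · linarith
          · intro j; simp only [hy, Fin.snoc_castSucc]
            exact ⟨by linarith [(hb j.castSucc.castSucc).2], by linarith [(hb j.castSucc.castSucc).1]⟩
        have hysum : ∑ i, y i = ((m + 2 - k : ℕ):ℝ) := by
          rw [Fin.sum_univ_castSucc (n := m)]
          simp only [hy, Fin.snoc_last, Fin.snoc_castSucc, Finset.sum_sub_distrib]
          rw [Nat.cast_sub hkle]
          push_cast
          have : ∑ _i : Fin m, (1:ℝ) = (m:ℝ) := by simp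
          rw [this]
          linarith [hdec, hsum]
        obtain ⟨Q, hQs, hQi, hQd⟩ := ih y (m + 2 - k) hyb hysum
        have hQl : Q (Fin.last m) (Fin.last m) = (1 - a) + (1 - b) := by
          rw [hQd]; simp [hy]
        obtain ⟨R, h1, h2, h3, h4, h5⟩ :=
          split_last m Q hQs hQi (1 - a) (1 - b)
            (by linarith [(hb (Fin.last m).castSucc).2]) (by linarith [(hb (Fin.last (m+1))).2]) hQl
        refine ⟨1 - R, ?_, ?_, ?_⟩
        · rw [Matrix.transpose_sub, Matrix.transpose_one, h1]
        · have : (1 - R) * (1 - R) = 1 - R - R + R * R := by noncomm_ring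
          rw [this, h2]; abel
        · intro i
          have hdi : ∀ j : Fin (m+2), (1 - R) j j = 1 - R j j := by
            intro j; simp [Matrix.sub_apply, Matrix.one_apply_eq]
          refine Fin.lastCases ?_ ?_ i
          · rw [hdi, h5]; ring
          · intro j
            refine Fin.lastCases ?_ ?_ j
            · rw [hdi, h4]; ring
            · intro i'
              rw [hdi, h3 i', hQd]; simp [hy]

theorem schur_horn_projections (n k : ℕ) (hk : 0 < k) (hkn : k ≤ n) (x : Fin n → ℝ) :
    (∃ P : Matrix (Fin n) (Fin n) ℝ,
        Pᵀ = P ∧ P * P = P ∧ P.trace = (k : ℝ) ∧ ∀ i, P i i = x i) ↔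
      ((∀ i, 0 ≤ x i ∧ x i ≤ 1) ∧ ∑ i, x i = (k : ℝ)) := by
  constructor
  · rintro ⟨P, hs, hi, htr, hd⟩
    have hsym : ∀ i j, P j i = P i j := by
      intro i j
      have h := congrFun (congrFun hs i) j
      rwa [Matrix.transpose_apply] at h
    constructor
    · intro i
      have h1 : x i = ∑ j, (P i j)^2 := by
        conv_lhs => rw [← hd i, ← hi]
        rw [Matrix.mul_apply]
        refine Finset.sum_congr rfl fun j _ => ?_
        rw [hsym i j]; ring
      have h2 : (0:ℝ) ≤ x i := by
        rw [h1]; exact Finset.sum_nonneg fun j _ => sq_nonneg _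
      have h3 : (x i)^2 ≤ x i := by
        conv_rhs => rw [h1]
        have h4 : (P i i)^2 ≤ ∑ j, (P i j)^2 :=
          Finset.single_le_sum (f := fun j => (P i j)^2)
            (fun j _ => sq_nonneg _) (Finset.mem_univ i)
        rw [hd i] at h4
        exact h4
      exact ⟨h2, by nlinarith⟩
    · rw [← htr]
      simp [Matrix.trace, Matrix.diag, hd]
  · rintro ⟨hb, hsum⟩
    obtain ⟨P, h1, h2, h3⟩ := exists_proj n x k hb hsum
    exact ⟨P, h1, h2, by simp [Matrix.trace, Matrix.diag, h3, hsum], h3⟩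
end

section
/- Let k ≤ n be positive integers and A ∈ ℝ^{n×k}, with condensed singular value decomposition A = U Σ Vᵀ where U ∈ V(k,n), V ∈ O(k), and Σ = diag(σ_1,…,σ_k) with σ_1 ≥ ⋯ ≥ σ_k ≥ 0. Then the maximum of trace(Aᵀ X) over X ∈ V(k,n) equals σ_1 + ⋯ + σ_k, and it is attained at X = U Vᵀ. -/
open Matrix BigOperators

theorem stiefel_LP (n k : ℕ) (hk : 0 < k) (hkn : k ≤ n)
    (A U : Matrix (Fin n) (Fin k) ℝ) (V : Matrix (Fin k) (Fin k) ℝ)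
    (σ : Fin k → ℝ) (hU : Uᵀ * U = 1) (hV : Vᵀ * V = 1)
    (hσmono : Antitone σ) (hσ0 : ∀ i, 0 ≤ σ i)
    (hA : A = U * Matrix.diagonal σ * Vᵀ) :
    IsGreatest
      {v : ℝ | ∃ X : Matrix (Fin n) (Fin k) ℝ, Xᵀ * X = 1 ∧ v = (Aᵀ * X).trace}
      (∑ i, σ i) ∧
    (U * Vᵀ)ᵀ * (U * Vᵀ) = 1 ∧ (Aᵀ * (U * Vᵀ)).trace = ∑ i, σ i := by
  have hVV' : V * Vᵀ = 1 := mul_eq_one_comm.mp hV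
  -- trace formula for any X
  have htr : ∀ X : Matrix (Fin n) (Fin k) ℝ,
      (Aᵀ * X).trace = ∑ i, σ i * (Uᵀ * X * V) i i := by
    intro X
    have : Aᵀ * X = V * (Matrix.diagonal σ * (Uᵀ * X)) := by
      rw [hA]
      simp [Matrix.transpose_mul, Matrix.diagonal_transpose, Matrix.mul_assoc]
    rw [this, Matrix.trace_mul_comm]
    have : Matrix.diagonal σ * (Uᵀ * X) * V = Matrix.diagonal σ * (Uᵀ * X * V) := by
      simp [Matrix.mul_assoc]
    rw [this]
    simp [Matrix.trace, Matrix.diag, Matrix.diagonal_mul]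
  -- diagonal entries bound
  have hdiag : ∀ X : Matrix (Fin n) (Fin k) ℝ, Xᵀ * X = 1 → ∀ i,
      (Uᵀ * X * V) i i ≤ 1 := by
    intro X hX i
    set N := X * V with hN
    have hNN : Nᵀ * N = 1 := by
      rw [hN, Matrix.transpose_mul]
      calc Vᵀ * Xᵀ * (X * V) = Vᵀ * (Xᵀ * X) * V := by simp [Matrix.mul_assoc]
        _ = 1 := by rw [hX, Matrix.mul_one, hV]
    have hUi : ∑ j, U j i * U j i = 1 := by
      have := congrFun (congrFun hU i) i
      simpa [Matrix.mul_apply, Matrix.one_apply] using this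
    have hNi : ∑ j, N j i * N j i = 1 := by
      have := congrFun (congrFun hNN i) i
      simpa [Matrix.mul_apply, Matrix.one_apply] using this
    have hM : (Uᵀ * X * V) i i = ∑ j, U j i * N j i := by
      rw [Matrix.mul_assoc, ← hN]
      simp [Matrix.mul_apply, Matrix.transpose_apply]
    have hcs : (∑ j, U j i * N j i) ^ 2 ≤ (∑ j, U j i ^ 2) * (∑ j, N j i ^ 2) :=
      Finset.sum_mul_sq_le_sq_mul_sq Finset.univ _ _
    have h1 : (∑ j, U j i * N j i) ^ 2 ≤ 1 := by
      have e1 : (∑ j, U j i ^ 2) = 1 := by simpa [sq] using hUi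
      have e2 : (∑ j, N j i ^ 2) = 1 := by simpa [sq] using hNi
      rw [e1, e2, mul_one] at hcs
      exact hcs
    have habs : |∑ j, U j i * N j i| ≤ 1 := (sq_le_one_iff_abs_le_one _).mp h1
    rw [hM]; exact (le_abs_self _).trans habs
  -- upper bound
  have hub : ∀ X : Matrix (Fin n) (Fin k) ℝ, Xᵀ * X = 1 →
      (Aᵀ * X).trace ≤ ∑ i, σ i := by
    intro X hX
    rw [htr X]
    calc ∑ i, σ i * (Uᵀ * X * V) i i ≤ ∑ i, σ i * 1 :=
          Finset.sum_le_sum fun i _ => mul_le_mul_of_nonneg_left (hdiag X hX i) (hσ0 i)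
      _ = ∑ i, σ i := by simp
  -- attainment
  have hXfeas : (U * Vᵀ)ᵀ * (U * Vᵀ) = 1 := by
    rw [Matrix.transpose_mul, Matrix.transpose_transpose]
    calc V * Uᵀ * (U * Vᵀ) = V * (Uᵀ * U) * Vᵀ := by simp [Matrix.mul_assoc]
      _ = 1 := by rw [hU, Matrix.mul_one, hVV']
  have hXval : (Aᵀ * (U * Vᵀ)).trace = ∑ i, σ i := by
    rw [htr]
    have : Uᵀ * (U * Vᵀ) * V = 1 := by
      calc Uᵀ * (U * Vᵀ) * V = Uᵀ * U * (Vᵀ * V) := by simp [Matrix.mul_assoc]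
        _ = 1 := by rw [hU, hV, Matrix.mul_one]
    rw [this]
    simp [Matrix.one_apply]
  refine ⟨⟨⟨U * Vᵀ, hXfeas, hXval.symm⟩, ?_⟩, hXfeas, hXval⟩
  rintro v ⟨X, hX, rfl⟩
  exact hub X hX
end
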